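/- The exponential mechanism is ε-differentially private: Let ℋ be a finite nonempty set of objects, let s : ℕ^𝒳 × ℋ → ℝ be a score function with finite global sensitivity Δs = sup over h ∈ ℋ and neighboring databases x, y of |s(x,h) − s(y,h)| > 0, and let ε > 0. The exponential mechanism M_E, which on input database x outputs each h ∈ ℋ with probability proportional to exp(ε · s(x,h) / (2Δs)), is ε-differentially private. -/

import Mathlib

open MeasureTheory

/-- The ℓ1 distance `‖x - y‖₁` between databases `x y : 𝒳 →₀ ℕ`. -/
def dbDist {𝒳 : Type*} [DecidableEq 𝒳] (x y : 𝒳 →₀ ℕ) : ℕ :=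
  (x.support ∪ y.support).sum fun a => ((x a : ℤ) - (y a : ℤ)).natAbs

/-- Databases `x` and `y` are neighboring if `‖x - y‖₁ ≤ 1`. -/
def Neighboring {𝒳 : Type*} [DecidableEq 𝒳] (x y : 𝒳 →₀ ℕ) : Prop :=
  dbDist x y ≤ 1

/-- A mechanism `M` is `(ε, δ)`-differentially private if for all measurable sets `S` and all
neighboring databases `x, y`, `M x S ≤ e^ε * M y S + δ`. -/
def IsDP {𝒳 : Type*} [DecidableEq 𝒳] {Ω : Type*} [MeasurableSpace Ω]
    (M : (𝒳 →₀ ℕ) → Measure Ω) (ε δ : ℝ) : Prop :=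
  ∀ x y : 𝒳 →₀ ℕ, Neighboring x y → ∀ S : Set Ω, MeasurableSet S →
    M x S ≤ ENNReal.ofReal (Real.exp ε) * M y S + ENNReal.ofReal δ

/-- The exponential mechanism over a finite set of objects `H` with score function `s`,
privacy parameter `ε` and score sensitivity `Δs`: on input database `x` it outputs each
`h : H` with probability proportional to `exp (ε * s x h / (2 Δs))`. -/
noncomputable def exponentialMechanism {𝒳 : Type*} {H : Type*} [Fintype H]
    [MeasurableSpace H] (s : (𝒳 →₀ ℕ) → H → ℝ) (ε Δs : ℝ) :
    (𝒳 →₀ ℕ) → Measure H :=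
  fun x => ∑ h : H,
    (ENNReal.ofReal (Real.exp (ε * s x h / (2 * Δs)) /
      ∑ h' : H, Real.exp (ε * s x h' / (2 * Δs)))) • Measure.dirac h

/-!
Changing the database to a neighbouring one moves every score by at most `Δs`, so each
unnormalised weight `exp (ε s(x,h) / (2Δs))` changes by a factor of at most `e^{ε/2}`.
The normalising constant is a sum of such weights, so it changes by at most `e^{ε/2}` as
well, and the two factors combine to `e^ε` for the probability of every single output.
-/

theorem dbDist_comm {𝒳 : Type*} [DecidableEq 𝒳] (x y : 𝒳 →₀ ℕ) : dbDist x y = dbDist y x := by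
  unfold dbDist
  rw [Finset.union_comm]
  exact Finset.sum_congr rfl fun a _ => by rw [← Int.natAbs_neg, neg_sub]

theorem Neighboring.symm {𝒳 : Type*} [DecidableEq 𝒳] {x y : 𝒳 →₀ ℕ} (h : Neighboring x y) :
    Neighboring y x := by
  rwa [Neighboring, dbDist_comm]

theorem Real.exp_mul_div_le_exp_half_mul_exp {ε Δ a b : ℝ} (hε : 0 ≤ ε) (hΔ : 0 < Δ)
    (hab : a - b ≤ Δ) :
    Real.exp (ε * a / (2 * Δ)) ≤ Real.exp (ε / 2) * Real.exp (ε * b / (2 * Δ)) := by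
  rw [← Real.exp_add, Real.exp_le_exp, ← sub_le_iff_le_add, div_sub_div_same, ← mul_sub,
    div_le_iff₀ (by positivity)]
  calc ε * (a - b) ≤ ε * Δ := mul_le_mul_of_nonneg_left hab hε
    _ = ε / 2 * (2 * Δ) := by ring

theorem Finset.div_sum_le_sq_mul_div_sum {ι : Type*} [Fintype ι] {f g : ι → ℝ} {c : ℝ}
    (hf : ∀ i, 0 < f i) (hg : ∀ i, 0 < g i) (hfg : ∀ i, f i ≤ c * g i)
    (hgf : ∀ i, g i ≤ c * f i) (i : ι) :
    f i / ∑ j, f j ≤ c ^ 2 * (g i / ∑ j, g j) := by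
  have hsum_pos : ∀ u : ι → ℝ, (∀ j, 0 < u j) → 0 < ∑ j, u j := fun u hu =>
    (hu i).trans_le (Finset.single_le_sum (fun j _ => (hu j).le) (Finset.mem_univ i))
  have hc : 0 ≤ c := nonneg_of_mul_nonneg_left ((hf i).le.trans (hfg i)) (hg i)
  have hsum : ∑ j, g j ≤ c * ∑ j, f j := by
    rw [Finset.mul_sum]
    exact Finset.sum_le_sum fun j _ => hgf j
  rw [← mul_div_assoc, div_le_div_iff₀ (hsum_pos f hf) (hsum_pos g hg)]
  calc f i * ∑ j, g j ≤ (c * g i) * (c * ∑ j, f j) :=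
        mul_le_mul (hfg i) hsum (hsum_pos g hg).le (mul_nonneg hc (hg i).le)
    _ = c ^ 2 * g i * ∑ j, f j := by ring

theorem MeasureTheory.Measure.sum_smul_apply_le_mul {Ω ι : Type*} [MeasurableSpace Ω]
    [Fintype ι] {a b : ι → ENNReal} {c : ENNReal} (hab : ∀ i, a i ≤ c * b i)
    (ν : ι → Measure Ω) (S : Set Ω) :
    (∑ i, a i • ν i) S ≤ c * (∑ i, b i • ν i) S := by
  simp only [Measure.finsetSum_apply, Measure.smul_apply, smul_eq_mul, Finset.mul_sum,
    ← mul_assoc]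
  exact Finset.sum_le_sum fun i _ => mul_le_mul_left (hab i) _

theorem exponentialMechanism_isDP_general {𝒳 : Type*} [DecidableEq 𝒳]
    {H : Type*} [Fintype H] [MeasurableSpace H]
    (s : (𝒳 →₀ ℕ) → H → ℝ) (ε Δs : ℝ) (hε : 0 < ε) (hΔs : 0 < Δs)
    (hsens : ∀ (h : H) (x y : 𝒳 →₀ ℕ), Neighboring x y → |s x h - s y h| ≤ Δs) :
    IsDP (exponentialMechanism s ε Δs) ε 0 := by
  intro x y hxy S _
  set w : (𝒳 →₀ ℕ) → H → ℝ := fun z h => Real.exp (ε * s z h / (2 * Δs))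
  have hweight : ∀ u v, Neighboring u v → ∀ h, w u h ≤ Real.exp (ε / 2) * w v h :=
    fun u v huv h => Real.exp_mul_div_le_exp_half_mul_exp hε.le hΔs
      (abs_le.mp (hsens h u v huv)).2
  have hprob : ∀ h, w x h / ∑ h', w x h' ≤ Real.exp ε * (w y h / ∑ h', w y h') := by
    intro h
    rw [show Real.exp ε = Real.exp (ε / 2) ^ 2 by rw [sq, ← Real.exp_add, add_halves]]
    exact Finset.div_sum_le_sq_mul_div_sum (fun _ => Real.exp_pos _) (fun _ => Real.exp_pos _)
      (hweight x y hxy) (hweight y x hxy.symm) h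
  rw [ENNReal.ofReal_zero, add_zero]
  refine Measure.sum_smul_apply_le_mul (fun h => ?_) _ S
  rw [← ENNReal.ofReal_mul (Real.exp_nonneg ε)]
  exact ENNReal.ofReal_le_ofReal (hprob h)

/-- **The exponential mechanism is `ε`-differentially private.** Let `H` be a finite
nonempty set of objects and `s` a score function whose global sensitivity over neighboring
databases is at most `Δs > 0`, and let `ε > 0`. Then the exponential mechanism, which
outputs `h` with probability proportional to `exp (ε s(x,h) / (2 Δs))`, is
`ε`-differentially private (i.e. `(ε, 0)`-DP). -/
theorem exponentialMechanism_isDP {𝒳 : Type*} [DecidableEq 𝒳]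
    {H : Type*} [Fintype H] [Nonempty H] [MeasurableSpace H] [MeasurableSingletonClass H]
    (s : (𝒳 →₀ ℕ) → H → ℝ) (ε Δs : ℝ) (hε : 0 < ε) (hΔs : 0 < Δs)
    (hsens : ∀ (h : H) (x y : 𝒳 →₀ ℕ), Neighboring x y → |s x h - s y h| ≤ Δs) :
    IsDP (exponentialMechanism s ε Δs) ε 0 :=
  exponentialMechanism_isDP_general s ε Δs hε hΔs hsens
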